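/- In the setting of the effective conductivity σ = σ(a,E,μ) of the operator ∇(a+E)∇, the symmetric part σ_sym satisfies the two-sided bound a ≤ σ_sym ≤ a + ⟨Eᵀ a⁻¹ E⟩ in the sense of quadratic forms, where ⟨·⟩ is the μ-mean of the matrix entries. -/

import Mathlib

/-!
Write `g = v l` for the corrector of the direction `l`. Since `E` is skew, it drops out of the
energy `(l + g) ⬝ (a + E)(l + g)`; together with the orthogonality relation for `φ = g` and the
zero mean of `g` this gives `l ⬝ σ l = l ⬝ a l + ⟨g ⬝ a g⟩`, hence the lower bound. The same
orthogonality relation gives `⟨g ⬝ a g⟩ = ⟨g ⬝ (-E l)⟩`, and Young's inequality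
`2 g ⬝ w ≤ g ⬝ a g + w ⬝ a⁻¹ w` bounds this by `½ ⟨g ⬝ a g⟩ + ½ ⟨l ⬝ Eᵀ a⁻¹ E l⟩`.
-/

open Matrix MeasureTheory

open scoped ENNReal

namespace Matrix

variable {n : Type*} [Fintype n]

lemma dotProduct_mulVec_eq_neg_of_transpose_eq_neg {R : Type*} [CommRing R]
    {S : Matrix n n R} (hS : Sᵀ = -S) (u w : n → R) : u ⬝ᵥ S *ᵥ w = -(w ⬝ᵥ S *ᵥ u) := by
  rw [dotProduct_mulVec, ← mulVec_transpose, hS, neg_mulVec, neg_dotProduct, dotProduct_comm]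

lemma dotProduct_mulVec_self_eq_zero_of_transpose_eq_neg {S : Matrix n n ℝ} (hS : Sᵀ = -S)
    (u : n → ℝ) : u ⬝ᵥ S *ᵥ u = 0 := by
  linarith [dotProduct_mulVec_eq_neg_of_transpose_eq_neg hS u u]

lemma dotProduct_mulVec_half_smul_add_transpose (σ : Matrix n n ℝ) (u : n → ℝ) :
    u ⬝ᵥ ((1 / 2 : ℝ) • (σ + σᵀ)) *ᵥ u = u ⬝ᵥ σ *ᵥ u := by
  have : u ⬝ᵥ σᵀ *ᵥ u = u ⬝ᵥ σ *ᵥ u := by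
    rw [mulVec_transpose, dotProduct_comm, dotProduct_mulVec]
  rw [smul_mulVec, dotProduct_smul, add_mulVec, dotProduct_add, this, smul_eq_mul]
  ring

lemma posSemidef_sub_of_dotProduct_mulVec_le {A B : Matrix n n ℝ} (hA : A.IsSymm)
    (hB : B.IsSymm) (h : ∀ u, u ⬝ᵥ B *ᵥ u ≤ u ⬝ᵥ A *ᵥ u) : (A - B).PosSemidef := by
  refine .of_dotProduct_mulVec_nonneg (isHermitian_iff_isSymm.2 (hA.sub hB)) fun u => ?_
  rw [star_trivial, sub_mulVec, dotProduct_sub, sub_nonneg]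
  exact h u

lemma dotProduct_mulVec_transpose_mul_mul (S b : Matrix n n ℝ) (u : n → ℝ) :
    u ⬝ᵥ (Sᵀ * b * S) *ᵥ u = S *ᵥ u ⬝ᵥ b *ᵥ S *ᵥ u := by
  rw [← mulVec_mulVec, ← mulVec_mulVec, dotProduct_mulVec, vecMul_transpose]

variable [DecidableEq n]

lemma PosDef.two_mul_dotProduct_le {a : Matrix n n ℝ} (ha : a.PosDef) (u w : n → ℝ) :
    2 * (u ⬝ᵥ w) ≤ u ⬝ᵥ a *ᵥ u + w ⬝ᵥ a⁻¹ *ᵥ w := by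
  have haT : aᵀ = a := isHermitian_iff_isSymm.1 ha.1
  have hw : a *ᵥ a⁻¹ *ᵥ w = w := by
    rw [mulVec_mulVec, mul_nonsing_inv a (isUnit_iff_ne_zero.2 ha.det_pos.ne'), one_mulVec]
  have hsq := ha.posSemidef.dotProduct_mulVec_nonneg (u - a⁻¹ *ᵥ w)
  rw [star_trivial, mulVec_sub, hw, sub_dotProduct, dotProduct_sub, dotProduct_sub,
    dotProduct_mulVec (a⁻¹ *ᵥ w), ← mulVec_transpose, haT, hw] at hsq
  linarith [dotProduct_comm (a⁻¹ *ᵥ w) w, dotProduct_comm w u]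

end Matrix

section Integration

variable {X : Type*} [MeasurableSpace X] {μ : Measure X} {n : Type*}

lemma isSymm_of_integral {M : X → Matrix n n ℝ} (hM : ∀ x, (M x).IsSymm) :
    (of fun i j => ∫ x, M x i j ∂μ).IsSymm :=
  IsSymm.ext fun i j => by simp only [of_apply, (hM _).apply i j]

variable [Fintype n]

lemma integrable_dotProduct {f g : X → n → ℝ} (hf : MemLp f 2 μ) (hg : MemLp g 2 μ) :
    Integrable (fun x => f x ⬝ᵥ g x) μ :=
  integrable_finsetSum _ fun i _ => (hf.eval i).integrable_mul (hg.eval i)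

lemma integral_dotProduct_left (c : n → ℝ) {F : X → n → ℝ} (hF : Integrable F μ) :
    ∫ x, c ⬝ᵥ F x ∂μ = c ⬝ᵥ fun i => ∫ x, F x i ∂μ := by
  simp only [dotProduct]
  rw [integral_finsetSum _ fun i _ => (hF.eval i).const_mul (c i)]
  simp only [integral_const_mul]

lemma integral_dotProduct_eq_zero_of_integral_eq_zero (c : n → ℝ) {f : X → n → ℝ}
    (hf : Integrable f μ) (hmean : ∀ i, ∫ x, f x i ∂μ = 0) : ∫ x, c ⬝ᵥ f x ∂μ = 0 := by
  simp [integral_dotProduct_left c hf, hmean]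

lemma MeasureTheory.MemLp.mulVec {p : ℝ≥0∞} {A : X → Matrix n n ℝ}
    (hA : ∀ i j, MemLp (fun x => A x i j) ∞ μ)
    {f : X → n → ℝ} (hf : MemLp f p μ) : MemLp (fun x => A x *ᵥ f x) p μ :=
  MemLp.of_eval fun i => memLp_finsetSum _ fun j _ => (hf.eval j).mul' (hA i j)

lemma memLp_top_mul_apply {A B : X → Matrix n n ℝ} (hA : ∀ i j, MemLp (fun x => A x i j) ∞ μ)
    (hB : ∀ i j, MemLp (fun x => B x i j) ∞ μ) (i j : n) :
    MemLp (fun x => (A x * B x) i j) ∞ μ :=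
  memLp_finsetSum _ fun k _ => (hB k j).mul' (hA i k)

lemma integral_dotProduct_mulVec {M : X → Matrix n n ℝ}
    (hM : ∀ i j, Integrable (fun x => M x i j) μ) (u w : n → ℝ) :
    ∫ x, u ⬝ᵥ M x *ᵥ w ∂μ = u ⬝ᵥ (of fun i j => ∫ x, M x i j ∂μ) *ᵥ w := by
  have hMw : ∀ i, Integrable (fun x => ∑ j, M x i j * w j) μ := fun i =>
    integrable_finsetSum _ fun j _ => (hM i j).mul_const (w j)
  rw [integral_dotProduct_left u (F := fun x => M x *ᵥ w) (Integrable.of_eval hMw)]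
  congr 1
  ext i
  simp only [mulVec, dotProduct, of_apply]
  rw [integral_finsetSum _ fun j _ => (hM i j).mul_const (w j)]
  simp only [integral_mul_const]

section Corrector

variable [IsProbabilityMeasure μ] {a : Matrix n n ℝ} {E : X → Matrix n n ℝ}
  {l : n → ℝ} {g : X → n → ℝ}

lemma memLp_flux (hE : ∀ i j, MemLp (fun x => E x i j) ∞ μ) (hg : MemLp g 2 μ) :
    MemLp (fun x => (a + E x) *ᵥ (l + g x)) 2 μ :=
  ((memLp_const l).add hg).mulVec fun i j => (memLp_top_const (a i j)).add (hE i j)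

lemma integral_dotProduct_flux (hE : ∀ i j, MemLp (fun x => E x i j) ∞ μ)
    (hskew : ∀ x, (E x)ᵀ = -E x) (hg : MemLp g 2 μ) (hmean : ∀ i, ∫ x, g x i ∂μ = 0)
    (horth : ∫ x, g x ⬝ᵥ (a + E x) *ᵥ (l + g x) ∂μ = 0) :
    ∫ x, l ⬝ᵥ (a + E x) *ᵥ (l + g x) ∂μ = l ⬝ᵥ a *ᵥ l + ∫ x, g x ⬝ᵥ a *ᵥ g x ∂μ := by
  set c := l ᵥ* a + a *ᵥ l
  have hpt : ∀ x, l ⬝ᵥ (a + E x) *ᵥ (l + g x) = l ⬝ᵥ a *ᵥ l + g x ⬝ᵥ a *ᵥ g x + c ⬝ᵥ g x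
      - g x ⬝ᵥ (a + E x) *ᵥ (l + g x) := by
    intro x
    have hsplit := add_dotProduct l (g x) ((a + E x) *ᵥ (l + g x))
    have hskewpart : (l + g x) ⬝ᵥ (a + E x) *ᵥ (l + g x) = (l + g x) ⬝ᵥ a *ᵥ (l + g x) := by
      rw [add_mulVec, dotProduct_add,
        dotProduct_mulVec_self_eq_zero_of_transpose_eq_neg (hskew x), add_zero]
    have hexpand : (l + g x) ⬝ᵥ a *ᵥ (l + g x) = l ⬝ᵥ a *ᵥ l + c ⬝ᵥ g x + g x ⬝ᵥ a *ᵥ g x := by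
      simp only [c, mulVec_add, dotProduct_add, add_dotProduct, dotProduct_mulVec l a (g x),
        dotProduct_comm (g x) (a *ᵥ l)]
      ring
    linarith
  have hgF := integrable_dotProduct hg (memLp_flux (a := a) (l := l) hE hg)
  have hgag := integrable_dotProduct hg (hg.mulVec fun i j => memLp_top_const (a i j))
  have hcg := integrable_dotProduct (memLp_const c) hg
  rw [integral_congr_ae (ae_of_all _ hpt), integral_sub (by fun_prop) hgF,
    integral_add (by fun_prop) hcg, integral_add (integrable_const _) hgag,
    integral_const, integral_dotProduct_eq_zero_of_integral_eq_zero c (hg.integrable one_le_two)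
    hmean, horth]
  simp

lemma integral_dotProduct_corrector_le [DecidableEq n] (ha : a.PosDef)
    (hE : ∀ i j, MemLp (fun x => E x i j) ∞ μ) (hskew : ∀ x, (E x)ᵀ = -E x) (hg : MemLp g 2 μ)
    (hmean : ∀ i, ∫ x, g x i ∂μ = 0) (horth : ∫ x, g x ⬝ᵥ (a + E x) *ᵥ (l + g x) ∂μ = 0) :
    ∫ x, g x ⬝ᵥ a *ᵥ g x ∂μ ≤
      l ⬝ᵥ (of fun i j => ∫ x, ((E x)ᵀ * a⁻¹ * E x) i j ∂μ) *ᵥ l := by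
  have hN : ∀ i j, MemLp (fun x => ((E x)ᵀ * a⁻¹ * E x) i j) ∞ μ :=
    memLp_top_mul_apply (memLp_top_mul_apply (fun i j => hE j i) fun i j => memLp_top_const _) hE
  have hpt : ∀ x, g x ⬝ᵥ a *ᵥ g x ≤ l ⬝ᵥ ((E x)ᵀ * a⁻¹ * E x) *ᵥ l
      + 2 * (g x ⬝ᵥ (a + E x) *ᵥ (l + g x)) - 2 * (a *ᵥ l ⬝ᵥ g x) := by
    intro x
    have hyoung := ha.two_mul_dotProduct_le (g x) (-(E x *ᵥ l))
    simp only [mulVec_neg, neg_dotProduct, dotProduct_neg, neg_neg] at hyoung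
    rw [dotProduct_mulVec_transpose_mul_mul, add_mulVec, mulVec_add, mulVec_add, dotProduct_add,
      dotProduct_add, dotProduct_add, dotProduct_mulVec_self_eq_zero_of_transpose_eq_neg (hskew x),
      dotProduct_comm (a *ᵥ l)]
    linarith
  have hlNl := integrable_dotProduct (memLp_const l) ((memLp_const l).mulVec hN)
  have hgF := integrable_dotProduct hg (memLp_flux (a := a) (l := l) hE hg)
  have hgag := integrable_dotProduct hg (hg.mulVec fun i j => memLp_top_const (a i j))
  have hcg := integrable_dotProduct (memLp_const (a *ᵥ l)) hg
  calc ∫ x, g x ⬝ᵥ a *ᵥ g x ∂μ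
      ≤ ∫ x, l ⬝ᵥ ((E x)ᵀ * a⁻¹ * E x) *ᵥ l
          + 2 * (g x ⬝ᵥ (a + E x) *ᵥ (l + g x)) - 2 * (a *ᵥ l ⬝ᵥ g x) ∂μ :=
        integral_mono hgag (by fun_prop) hpt
    _ = ∫ x, l ⬝ᵥ ((E x)ᵀ * a⁻¹ * E x) *ᵥ l ∂μ := by
        rw [integral_sub (by fun_prop) (by fun_prop), integral_add hlNl (by fun_prop),
          integral_const_mul, integral_const_mul, horth,
          integral_dotProduct_eq_zero_of_integral_eq_zero _ (hg.integrable one_le_two) hmean]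
        ring
    _ = _ := integral_dotProduct_mulVec (fun i j => (hN i j).integrable le_top) l l

end Corrector

end Integration

theorem stmt7_general {d : ℕ} {X : Type*} [MeasurableSpace X] (μ : Measure X)
    [IsProbabilityMeasure μ]
    (a : Matrix (Fin d) (Fin d) ℝ) (ha : a.PosDef)
    (E : X → Matrix (Fin d) (Fin d) ℝ)
    (hEmeas : ∀ i j, Measurable fun x => E x i j)
    (hEskew : ∀ x, (E x)ᵀ = -(E x))
    (hEbdd : ∃ C : ℝ, ∀ x i j, |E x i j| ≤ C)
    (Fpot : Set (X → Fin d → ℝ))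
    (hFpotL2 : ∀ f ∈ Fpot, MemLp f 2 μ)
    (hFpotMean : ∀ f ∈ Fpot, ∀ i, ∫ x, f x i ∂μ = 0)
    (v : (Fin d → ℝ) → X → Fin d → ℝ)
    (hv : ∀ l, v l ∈ Fpot)
    (horth : ∀ l, ∀ φ ∈ Fpot,
      ∫ x, φ x ⬝ᵥ (a + E x).mulVec (l + v l x) ∂μ = 0)
    (σ : Matrix (Fin d) (Fin d) ℝ)
    (hσ : ∀ l, σ.mulVec l = fun i => ∫ x, ((a + E x).mulVec (l + v l x)) i ∂μ) :
    (((1 / 2 : ℝ) • (σ + σᵀ)) - a).PosSemidef ∧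
    (a + (Matrix.of fun i j => ∫ x, ((E x)ᵀ * a⁻¹ * E x) i j ∂μ)
        - (1 / 2 : ℝ) • (σ + σᵀ)).PosSemidef := by
  obtain ⟨C, hC⟩ := hEbdd
  have hE : ∀ i j, MemLp (fun x => E x i j) ∞ μ := fun i j =>
    memLp_top_of_bound (hEmeas i j).aestronglyMeasurable C (ae_of_all _ fun x => hC x i j)
  have hform : ∀ l, l ⬝ᵥ σ *ᵥ l = l ⬝ᵥ a *ᵥ l + ∫ x, v l x ⬝ᵥ a *ᵥ v l x ∂μ := fun l => by
    have hg := hFpotL2 _ (hv l)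
    rw [hσ l, ← integral_dotProduct_left l ((memLp_flux hE hg).integrable one_le_two)]
    exact integral_dotProduct_flux hE hEskew hg (hFpotMean _ (hv l)) (horth l _ (hv l))
  have haS : a.IsSymm := isHermitian_iff_isSymm.1 ha.1
  have hσS : ((1 / 2 : ℝ) • (σ + σᵀ)).IsSymm := (isSymm_add_transpose_self σ).smul _
  have hNS : ∀ x, ((E x)ᵀ * a⁻¹ * E x).IsSymm := fun x => by
    simpa using isHermitian_iff_isSymm.1 (isHermitian_conjTranspose_mul_mul (E x) ha.1.inv)
  refine ⟨posSemidef_sub_of_dotProduct_mulVec_le hσS haS fun l => ?_,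
    posSemidef_sub_of_dotProduct_mulVec_le (haS.add (isSymm_of_integral hNS)) hσS fun l => ?_⟩
  · rw [dotProduct_mulVec_half_smul_add_transpose, hform, le_add_iff_nonneg_right]
    exact integral_nonneg fun x => by simpa using ha.posSemidef.dotProduct_mulVec_nonneg (v l x)
  · rw [dotProduct_mulVec_half_smul_add_transpose, hform, add_mulVec, dotProduct_add,
      add_le_add_iff_left]
    exact integral_dotProduct_corrector_le ha hE hEskew (hFpotL2 _ (hv l)) (hFpotMean _ (hv l))
      (horth l _ (hv l))

/-- Two-sided quadratic-form bound on the symmetric part of the effective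
conductivity: `a ≤ σ_sym ≤ a + ⟨Eᵀ a⁻¹ E⟩`, where `σ_sym = (σ + σᵀ)/2` and `⟨·⟩`
denotes the μ-mean of the matrix entries. -/
theorem stmt7 {d : ℕ} {X : Type*} [MeasurableSpace X] (μ : Measure X)
    [IsProbabilityMeasure μ]
    (a : Matrix (Fin d) (Fin d) ℝ) (ha : a.PosDef)
    (E : X → Matrix (Fin d) (Fin d) ℝ)
    (hEmeas : ∀ i j, Measurable fun x => E x i j)
    (hEskew : ∀ x, (E x)ᵀ = -(E x))
    (hEbdd : ∃ C : ℝ, ∀ x i j, |E x i j| ≤ C)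
    (Fpot : Set (X → Fin d → ℝ))
    (hFpotL2 : ∀ f ∈ Fpot, MemLp f 2 μ)
    (hFpotMean : ∀ f ∈ Fpot, ∀ i, ∫ x, f x i ∂μ = 0)
    (h0 : (fun _ => 0) ∈ Fpot)
    (v : (Fin d → ℝ) → X → Fin d → ℝ)
    (hv : ∀ l, v l ∈ Fpot)
    (horth : ∀ l, ∀ φ ∈ Fpot,
      ∫ x, φ x ⬝ᵥ (a + E x).mulVec (l + v l x) ∂μ = 0)
    (σ : Matrix (Fin d) (Fin d) ℝ)
    (hσ : ∀ l, σ.mulVec l = fun i => ∫ x, ((a + E x).mulVec (l + v l x)) i ∂μ) :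
    (((1 / 2 : ℝ) • (σ + σᵀ)) - a).PosSemidef ∧
    (a + (Matrix.of fun i j => ∫ x, ((E x)ᵀ * a⁻¹ * E x) i j ∂μ)
        - (1 / 2 : ℝ) • (σ + σᵀ)).PosSemidef :=
  stmt7_general μ a ha E hEmeas hEskew hEbdd Fpot hFpotL2 hFpotMean v hv horth σ hσ
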